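/- arXiv:2105.11839 — 2 statements merged into one kernel-verified Lean document; each statement's English description precedes it below -/
import Mathlib

section
/- Fix d, k ∈ ℕ and Z = (U, V) with U, V : Fin d → EuclideanSpace ℝ (Fin k) such that ⟪u_i, v_j⟫ ≠ 0 for all i ≠ j. Then for every function f from zero-diagonal binary d × d matrices to ℝ, the expectation under the graph model converges to the value at the limiting graph: lim_{α→∞} ∑_G p_α(G | Z) · f(G) = f(G_∞(Z)), where the sum is over all zero-diagonal binary matrices G : Fin d → Fin d → {0,1}. -/
open Filter

/-- Sigmoid with inverse temperature `α`: `σ_α(x) = 1 / (1 + exp (−α x))`. -/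
noncomputable def sigmoidAlpha (α x : ℝ) : ℝ := (1 + Real.exp (-(α * x)))⁻¹

/-- The DiBS latent graph model probability `p_α(G | Z)`. -/
noncomputable def pAlpha {d k : ℕ} (α : ℝ) (U V : Fin d → EuclideanSpace ℝ (Fin k))
    (G : Fin d → Fin d → Bool) : ℝ :=
  ∏ i, ∏ j,
    if i = j then 1
    else
      sigmoidAlpha α (inner ℝ (U i) (V j)) ^ (G i j).toNat *
        (1 - sigmoidAlpha α (inner ℝ (U i) (V j))) ^ (1 - (G i j).toNat)

/-- Zero-diagonal binary `d × d` matrices. -/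
def ZeroDiagGraph (d : ℕ) : Type := {G : Fin d → Fin d → Bool // ∀ i, G i i = false}

instance (d : ℕ) : Fintype (ZeroDiagGraph d) := Subtype.fintype _

/-- The limiting graph `G_∞(Z)` as a zero-diagonal binary matrix. -/
noncomputable def gInftyZ {d k : ℕ} (U V : Fin d → EuclideanSpace ℝ (Fin k)) :
    ZeroDiagGraph d :=
  ⟨fun i j => decide (i ≠ j ∧ 0 < (inner ℝ (U i) (V j) : ℝ)), fun i => by simp⟩

/-! Since no `⟪u_i, v_j⟫` with `i ≠ j` vanishes, each edge probability `σ_α(⟪u_i, v_j⟫)` tends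
to `0` or `1`, so each factor of `p_α(G | Z)` tends to `1` if `G` agrees with `G_∞(Z)` at `(i, j)`
and to `0` otherwise. Hence `p_α(· | Z)` converges pointwise to the point mass at `G_∞(Z)`, and the
expectation, a finite sum, converges to `f(G_∞(Z))`. -/

open Topology

lemma tendsto_sigmoidAlpha_atTop {x : ℝ} (hx : x ≠ 0) :
    Tendsto (fun α => sigmoidAlpha α x) atTop (𝓝 ((decide (0 < x)).toNat : ℝ)) := by
  unfold sigmoidAlpha
  rcases hx.lt_or_gt with hneg | hpos
  · have hexp : Tendsto (fun α : ℝ => Real.exp (-(α * x))) atTop atTop := by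
      refine Real.tendsto_exp_atTop.comp ?_
      simpa only [id, mul_neg] using tendsto_id.atTop_mul_const (neg_pos.mpr hneg)
    simpa [hneg.not_gt, Function.comp_def] using
      tendsto_inv_atTop_zero.comp (tendsto_atTop_add_const_left _ 1 hexp)
  · have hexp : Tendsto (fun α : ℝ => Real.exp (-(α * x))) atTop (𝓝 0) :=
      Real.tendsto_exp_neg_atTop_nhds_zero.comp (tendsto_id.atTop_mul_const hpos)
    simpa [hpos] using (tendsto_const_nhds.add hexp).inv₀ (by norm_num : (1 : ℝ) + 0 ≠ 0)

lemma tendsto_bernoulli_likelihood {ι : Type*} {l : Filter ι} {p : ι → ℝ} {c : Bool}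
    (hp : Tendsto p l (𝓝 (c.toNat : ℝ))) (b : Bool) :
    Tendsto (fun t => p t ^ b.toNat * (1 - p t) ^ (1 - b.toNat)) l
      (𝓝 (if b = c then 1 else 0)) := by
  have hcont : Continuous fun q : ℝ => q ^ b.toNat * (1 - q) ^ (1 - b.toNat) := by fun_prop
  have hlim :
      (c.toNat : ℝ) ^ b.toNat * (1 - c.toNat) ^ (1 - b.toNat) = if b = c then 1 else 0 := by
    cases b <;> cases c <;> norm_num
  exact hlim ▸ (hcont.tendsto _).comp hp

lemma prod_boole_apply_eq_apply {α β M : Type*} [Fintype α] [CommMonoidWithZero M] [DecidableEq β]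
    [DecidableEq (α → β)] (g h : α → β) :
    (∏ a, if g a = h a then (1 : M) else 0) = if g = h then 1 else 0 := by
  simp only [Fintype.prod_boole, funext_iff]

open Classical in
lemma tendsto_pAlpha_atTop {d k : ℕ} (U V : Fin d → EuclideanSpace ℝ (Fin k))
    (hne : ∀ i j : Fin d, i ≠ j → (inner ℝ (U i) (V j) : ℝ) ≠ 0) (G : ZeroDiagGraph d) :
    Tendsto (fun α => pAlpha α U V G.1) atTop
      (𝓝 (if G = gInftyZ U V then 1 else 0)) := by
  have hfactor : ∀ i j, Tendsto (fun α => if i = j then 1 else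
        sigmoidAlpha α (inner ℝ (U i) (V j)) ^ (G.1 i j).toNat *
          (1 - sigmoidAlpha α (inner ℝ (U i) (V j))) ^ (1 - (G.1 i j).toNat)) atTop
      (𝓝 (if G.1 i j = (gInftyZ U V).1 i j then 1 else 0)) := by
    intro i j
    by_cases hij : i = j
    · subst hij
      simp only [G.2, (gInftyZ U V).2, if_true]
      exact tendsto_const_nhds
    · have hG : (gInftyZ U V).1 i j = decide (0 < (inner ℝ (U i) (V j) : ℝ)) := by
        simp [gInftyZ, hij]
      simpa only [hij, if_false, hG] using
        tendsto_bernoulli_likelihood (tendsto_sigmoidAlpha_atTop (hne i j hij)) (G.1 i j)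
  have hprod := tendsto_finsetProd Finset.univ fun i _ =>
    tendsto_finsetProd Finset.univ fun j _ => hfactor i j
  have hval : G.1 = (gInftyZ U V).1 ↔ G = gInftyZ U V := Subtype.val_inj
  simpa only [pAlpha, prod_boole_apply_eq_apply, hval] using hprod

/-- Equation (A.26), second line, of DiBS: as `α → ∞`, the expectation of `f` under the
graph model converges to `f(G_∞(Z))`, provided no inner product `⟪u_i, v_j⟫` (for
`i ≠ j`) vanishes. -/
theorem pAlpha_expectation_tendsto {d k : ℕ}
    (U V : Fin d → EuclideanSpace ℝ (Fin k))
    (hne : ∀ i j : Fin d, i ≠ j → (inner ℝ (U i) (V j) : ℝ) ≠ 0)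
    (f : ZeroDiagGraph d → ℝ) :
    Tendsto (fun α : ℝ => ∑ G : ZeroDiagGraph d, pAlpha α U V G.1 * f G) atTop
      (nhds (f (gInftyZ U V))) := by
  classical
  have hsum := tendsto_finsetSum Finset.univ fun G _ =>
    (tendsto_pAlpha_atTop U V hne G).mul_const (f G)
  simpa only [ite_mul, one_mul, zero_mul, Finset.sum_ite_eq', Finset.mem_univ, if_true]
    using hsum
end

section
/- Fix d, k ∈ ℕ and Z = (U, V) with U, V : Fin d → EuclideanSpace ℝ (Fin k) such that ⟪u_i, v_j⟫ ≠ 0 for all i ≠ j. Let L be a function from zero-diagonal binary d × d matrices to ℝ with L(G) > 0 for all G, and let f be any real-valued function on such matrices. Then lim_{α→∞} (∑_G p_α(G | Z) · L(G) · f(G)) / (∑_G p_α(G | Z) · L(G)) = f(G_∞(Z)), where the sums range over all zero-diagonal binary matrices G. -/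
open Filter

/-!
As `α → ∞` the sigmoid `σ_α(x)` tends to `1` for `x > 0` and to `0` for `x < 0`. Since no
off-diagonal score vanishes, every Bernoulli factor of `p_α(G | Z)` converges to `1` or `0`
according as `G i j` agrees with `G_∞(Z) i j` or not, so `p_α(· | Z)` converges to the point
mass at `G_∞(Z)`. The sums being finite, numerator and denominator converge to `L(G_∞) f(G_∞)`
and `L(G_∞) > 0`.
-/

open Topology

lemma tendsto_sigmoidAlpha_of_pos {x : ℝ} (hx : 0 < x) :
    Tendsto (fun α => sigmoidAlpha α x) atTop (𝓝 1) := by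
  have hexp : Tendsto (fun α : ℝ => Real.exp (-(α * x))) atTop (𝓝 0) :=
    Real.tendsto_exp_atBot.comp (tendsto_neg_atTop_atBot.comp (tendsto_id.atTop_mul_const hx))
  simpa [sigmoidAlpha] using (tendsto_const_nhds.add hexp).inv₀ (by norm_num : (1 + 0 : ℝ) ≠ 0)

lemma tendsto_sigmoidAlpha_of_neg {x : ℝ} (hx : x < 0) :
    Tendsto (fun α => sigmoidAlpha α x) atTop (𝓝 0) := by
  have hexp : Tendsto (fun α : ℝ => Real.exp (-(α * x))) atTop atTop := by
    refine Real.tendsto_exp_atTop.comp ?_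
    simpa using tendsto_id.atTop_mul_const (neg_pos.mpr hx)
  exact tendsto_inv_atTop_zero.comp (tendsto_atTop_add_const_left _ 1 hexp)

lemma tendsto_sigmoidAlpha {x : ℝ} (hx : x ≠ 0) :
    Tendsto (fun α => sigmoidAlpha α x) atTop (𝓝 (if 0 < x then 1 else 0)) := by
  rcases hx.lt_or_gt with hneg | hpos
  · simpa [hneg.not_gt] using tendsto_sigmoidAlpha_of_neg hneg
  · simpa [hpos] using tendsto_sigmoidAlpha_of_pos hpos

lemma tendsto_sigmoidAlpha_bernoulli {x : ℝ} (hx : x ≠ 0) (b : Bool) :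
    Tendsto (fun α => sigmoidAlpha α x ^ b.toNat * (1 - sigmoidAlpha α x) ^ (1 - b.toNat))
      atTop (𝓝 (if b = decide (0 < x) then 1 else 0)) := by
  have hσ := tendsto_sigmoidAlpha hx
  convert (hσ.pow b.toNat).mul ((tendsto_const_nhds (x := (1 : ℝ))).sub hσ |>.pow _) using 2
  by_cases h : 0 < x <;> cases b <;> simp [h]

lemma tendsto_pAlpha_prod {d k : ℕ} (U V : Fin d → EuclideanSpace ℝ (Fin k))
    (hne : ∀ i j : Fin d, i ≠ j → (inner ℝ (U i) (V j) : ℝ) ≠ 0) (G : ZeroDiagGraph d) :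
    Tendsto (fun α => pAlpha α U V G.1) atTop
      (𝓝 (∏ i, ∏ j, if G.1 i j = (gInftyZ U V).1 i j then 1 else 0)) := by
  refine tendsto_finsetProd _ fun i _ => tendsto_finsetProd _ fun j _ => ?_
  by_cases hij : i = j
  · subst hij
    simp [G.2 i, (gInftyZ U V).2 i]
  · simpa [hij, gInftyZ] using tendsto_sigmoidAlpha_bernoulli (hne i j hij) (G.1 i j)

lemma tendsto_pAlpha_pi_single {d k : ℕ} [DecidableEq (ZeroDiagGraph d)]
    (U V : Fin d → EuclideanSpace ℝ (Fin k))
    (hne : ∀ i j : Fin d, i ≠ j → (inner ℝ (U i) (V j) : ℝ) ≠ 0) :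
    Tendsto (fun α (G : ZeroDiagGraph d) => pAlpha α U V G.1) atTop
      (𝓝 (Pi.single (gInftyZ U V) 1)) := by
  refine tendsto_pi_nhds.mpr fun G => ?_
  convert tendsto_pAlpha_prod U V hne G using 2
  simp only [Finset.prod_boole, Finset.mem_univ, true_implies, Pi.single_apply]
  exact if_congr ⟨fun h i j => h ▸ rfl, fun h => Subtype.ext (funext₂ h)⟩ rfl rfl

lemma tendsto_weighted_average_of_tendsto_pi_single {α ι : Type*} [Fintype ι] [DecidableEq ι]
    {l : Filter α} {w : α → ι → ℝ} {a : ι} (hw : Tendsto w l (𝓝 (Pi.single a (1 : ℝ))))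
    (L f : ι → ℝ) (ha : L a ≠ 0) :
    Tendsto (fun t => (∑ i, w t i * L i * f i) / ∑ i, w t i * L i) l (𝓝 (f a)) := by
  have hwi : ∀ i, Tendsto (fun t => w t i) l (𝓝 (Pi.single (M := fun _ => ℝ) a 1 i)) :=
    fun i => hw.apply_nhds i
  have hnum := tendsto_finsetSum Finset.univ fun i _ => ((hwi i).mul_const (L i)).mul_const (f i)
  have hden := tendsto_finsetSum Finset.univ fun i _ => (hwi i).mul_const (L i)
  simp only [Pi.single_apply, ite_mul, one_mul, zero_mul, Finset.sum_ite_eq', Finset.mem_univ,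
    if_true] at hnum hden
  rw [← mul_div_cancel_left₀ (f a) ha]
  exact hnum.div hden ha

/-- Limits (A.27)–(A.29) of DiBS (marginal case of equation (5.1)): as `α → ∞`,
`(∑_G p_α(G|Z) L(G) f(G)) / (∑_G p_α(G|Z) L(G)) → f(G_∞(Z))` for positive `L`,
provided no inner product `⟪u_i, v_j⟫` (for `i ≠ j`) vanishes. -/
theorem pAlpha_weighted_expectation_tendsto {d k : ℕ}
    (U V : Fin d → EuclideanSpace ℝ (Fin k))
    (hne : ∀ i j : Fin d, i ≠ j → (inner ℝ (U i) (V j) : ℝ) ≠ 0)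
    (L : ZeroDiagGraph d → ℝ) (hL : ∀ G, 0 < L G)
    (f : ZeroDiagGraph d → ℝ) :
    Tendsto (fun α : ℝ =>
        (∑ G : ZeroDiagGraph d, pAlpha α U V G.1 * L G * f G) /
          (∑ G : ZeroDiagGraph d, pAlpha α U V G.1 * L G)) atTop
      (nhds (f (gInftyZ U V))) := by
  classical
  exact tendsto_weighted_average_of_tendsto_pi_single (tendsto_pAlpha_pi_single U V hne) L f
    (hL _).ne'
end
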